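/- arXiv:2109.03129 — 2 statements merged into one kernel-verified Lean document; each statement's English description precedes it below -/
import Mathlib

section
/- There exist a constant C > 0 and N ∈ ℕ such that for all n ≥ N the following holds: if G is a simple graph on n vertices with s(G) = s(n), x is a unit eigenvector of the adjacency matrix of G for λ₁(G), and z is a unit eigenvector for λₙ(G), then max_u |x_u| ≤ C·n^{−1/2} and max_u |z_u| ≤ C·n^{−1/2}. -/
/- The adjacency matrix (over `ℝ`) of a simple graph on `Fin n`. -/
open scoped Classical in
noncomputable def adjMat {n : ℕ} (G : SimpleGraph (Fin n)) : Matrix (Fin n) (Fin n) ℝ :=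
  fun i j => if G.Adj i j then 1 else 0

lemma adjMat_isHermitian {n : ℕ} (G : SimpleGraph (Fin n)) :
    (adjMat G).IsHermitian := by
  classical
  unfold Matrix.IsHermitian
  ext i j
  simp only [Matrix.conjTranspose_apply, adjMat]
  rw [show star (if G.Adj j i then (1:ℝ) else 0) = (if G.Adj j i then (1:ℝ) else 0) from
    star_trivial _]
  exact if_congr (G.adj_comm j i) rfl rfl

/-- The eigenvalues of the adjacency matrix of `G`. -/
noncomputable def graphEigs {n : ℕ} (G : SimpleGraph (Fin n)) : Fin n → ℝ :=
  (adjMat_isHermitian G).eigenvalues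

/-- `λ₁(G)`, the largest adjacency eigenvalue. -/
noncomputable def lamMax {n : ℕ} (G : SimpleGraph (Fin n)) : ℝ := ⨆ i, graphEigs G i

/-- `λₙ(G)`, the smallest adjacency eigenvalue. -/
noncomputable def lamMin {n : ℕ} (G : SimpleGraph (Fin n)) : ℝ := ⨅ i, graphEigs G i

/-- The spread `s(G) = λ₁(G) - λₙ(G)`. -/
noncomputable def spread {n : ℕ} (G : SimpleGraph (Fin n)) : ℝ := lamMax G - lamMin G

/-!
The complete split graph on disjoint sets `S`, `T` with `#S = 2t`, `#T = t` (a clique on `S`,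
joined completely to the independent set `T`) has adjacency matrix
`𝟙_{S∪T} 𝟙_{S∪T}ᵀ - 𝟙_T 𝟙_Tᵀ - diag 𝟙_S`. The Rayleigh quotients of `𝟙_S + 𝟙_T` and
`𝟙_S - 2 𝟙_T` then show that its spread is at least `(10t - 1)/3 ≈ 10n/9`.
For a unit eigenvector `x` with eigenvalue `μ` of a 0–1 matrix, Cauchy–Schwarz on one row of
`A x = μ x` gives `|μ| |x_u| ≤ √n`; summing the squares over `u` gives `|μ| ≤ n`.
So in a spread-extremal graph `λ₁ = s(G) + λₙ ≥ 10n/9 - n - O(1)` and likewise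
`-λₙ ≥ n/9 - O(1)`, and the row bound turns this into `|x_u|, |z_u| ≤ 20/√n`.
-/

open Matrix Finset

theorem Finset.exists_disjoint_card_eq {α : Type*} [Fintype α] [DecidableEq α] {s t : ℕ}
    (h : s + t ≤ Fintype.card α) : ∃ S T : Finset α, Disjoint S T ∧ #S = s ∧ #T = t := by
  obtain ⟨U, -, hU⟩ := exists_subset_card_eq (s := (univ : Finset α)) (by simpa using h)
  obtain ⟨S, hSU, hS⟩ := exists_subset_card_eq (s := U) (n := s) (by omega)
  exact ⟨S, U \ S, disjoint_sdiff, hS, by rw [card_sdiff_of_subset hSU]; omega⟩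

section Rayleigh

variable {ι : Type*} [Fintype ι] [DecidableEq ι] {A : Matrix ι ι ℝ}

open scoped MatrixOrder in
theorem Matrix.IsHermitian.dotProduct_mulVec_le (hA : A.IsHermitian) {c : ℝ}
    (hc : ∀ i, hA.eigenvalues i ≤ c) (v : ι → ℝ) : v ⬝ᵥ A *ᵥ v ≤ c * (v ⬝ᵥ v) := by
  have hle : A ≤ algebraMap ℝ _ c := le_algebraMap_of_spectrum_le (by
    rw [hA.spectrum_real_eq_range_eigenvalues]; rintro _ ⟨i, rfl⟩; exact hc i) hA
  simpa [sub_mulVec, Algebra.algebraMap_eq_smul_one, smul_mulVec, dotProduct_sub] using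
    (Matrix.le_iff.mp hle).dotProduct_mulVec_nonneg v

open scoped MatrixOrder in
theorem Matrix.IsHermitian.le_dotProduct_mulVec (hA : A.IsHermitian) {c : ℝ}
    (hc : ∀ i, c ≤ hA.eigenvalues i) (v : ι → ℝ) : c * (v ⬝ᵥ v) ≤ v ⬝ᵥ A *ᵥ v := by
  have hle : algebraMap ℝ _ c ≤ A := algebraMap_le_of_le_spectrum (by
    rw [hA.spectrum_real_eq_range_eigenvalues]; rintro _ ⟨i, rfl⟩; exact hc i) hA
  simpa [sub_mulVec, Algebra.algebraMap_eq_smul_one, smul_mulVec, dotProduct_sub] using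
    (Matrix.le_iff.mp hle).dotProduct_mulVec_nonneg v

end Rayleigh

section UnitEigenvector

variable {ι : Type*} [Fintype ι] {A : Matrix ι ι ℝ} {μ : ℝ} {x : ι → ℝ}

theorem sq_mul_apply_le_card_of_mulVec_eq_smul (hA : ∀ i j, |A i j| ≤ 1)
    (hx : ∑ u, x u ^ 2 = 1) (hμ : A *ᵥ x = μ • x) (u : ι) :
    (μ * x u) ^ 2 ≤ Fintype.card ι := by
  have hrow : μ * x u = ∑ j, A u j * x j := by
    simpa [mulVec, dotProduct] using (congrFun hμ u).symm
  calc (μ * x u) ^ 2 = (∑ j, A u j * x j) ^ 2 := by rw [hrow]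
    _ ≤ (∑ j, A u j ^ 2) * ∑ j, x j ^ 2 := sum_mul_sq_le_sq_mul_sq _ _ _
    _ ≤ ∑ _j : ι, (1 : ℝ) := by
      rw [hx, mul_one]
      exact sum_le_sum fun j _ => sq_le_one_iff_abs_le_one _ |>.mpr (hA u j)
    _ = Fintype.card ι := by simp

theorem abs_le_card_of_mulVec_eq_smul (hA : ∀ i j, |A i j| ≤ 1)
    (hx : ∑ u, x u ^ 2 = 1) (hμ : A *ᵥ x = μ • x) : |μ| ≤ Fintype.card ι := by
  have hsq : μ ^ 2 ≤ (Fintype.card ι : ℝ) ^ 2 := calc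
    μ ^ 2 = ∑ u, (μ * x u) ^ 2 := by simp_rw [mul_pow, ← mul_sum, hx, mul_one]
    _ ≤ ∑ _u : ι, (Fintype.card ι : ℝ) :=
      sum_le_sum fun u _ => sq_mul_apply_le_card_of_mulVec_eq_smul hA hx hμ u
    _ = (Fintype.card ι : ℝ) ^ 2 := by simp [sq]
  exact abs_le_of_sq_le_sq hsq (by positivity)

theorem abs_apply_le_div_sqrt_card (hA : ∀ i j, |A i j| ≤ 1)
    (hx : ∑ u, x u ^ 2 = 1) (hμ : A *ᵥ x = μ • x) {C : ℝ}
    (hC : Fintype.card ι ≤ C * |μ|) (u : ι) : |x u| ≤ C / √(Fintype.card ι) := by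
  have hcard : (0 : ℝ) < Fintype.card ι := by exact_mod_cast Fintype.card_pos_iff.mpr ⟨u⟩
  have hsqrt : 0 < √(Fintype.card ι : ℝ) := Real.sqrt_pos.mpr hcard
  have hrow : |μ| * |x u| ≤ √(Fintype.card ι) := by
    rw [← abs_mul]
    exact Real.abs_le_sqrt (sq_mul_apply_le_card_of_mulVec_eq_smul hA hx hμ u)
  have hC0 : 0 < C := pos_of_mul_pos_left (hcard.trans_le hC) (abs_nonneg μ)
  rw [le_div_iff₀ hsqrt]
  refine le_of_mul_le_mul_left ?_ hsqrt
  calc √(Fintype.card ι : ℝ) * (|x u| * √(Fintype.card ι)) = Fintype.card ι * |x u| := by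
        rw [mul_comm, mul_assoc, Real.mul_self_sqrt hcard.le, mul_comm]
    _ ≤ C * (|μ| * |x u|) := by rw [← mul_assoc]; gcongr
    _ ≤ C * √(Fintype.card ι) := by gcongr
    _ = √(Fintype.card ι : ℝ) * C := mul_comm _ _

end UnitEigenvector

section AdjacencySpectrum

variable {n : ℕ} (G : SimpleGraph (Fin n))

theorem graphEigs_le_lamMax (i : Fin n) : graphEigs G i ≤ lamMax G :=
  le_ciSup (Set.finite_range _).bddAbove i

theorem lamMin_le_graphEigs (i : Fin n) : lamMin G ≤ graphEigs G i :=
  ciInf_le (Set.finite_range _).bddBelow i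

theorem dotProduct_adjMat_mulVec_le_lamMax (v : Fin n → ℝ) :
    v ⬝ᵥ adjMat G *ᵥ v ≤ lamMax G * (v ⬝ᵥ v) :=
  (adjMat_isHermitian G).dotProduct_mulVec_le (graphEigs_le_lamMax G) v

theorem lamMin_mul_le_dotProduct_adjMat_mulVec (v : Fin n → ℝ) :
    lamMin G * (v ⬝ᵥ v) ≤ v ⬝ᵥ adjMat G *ᵥ v :=
  (adjMat_isHermitian G).le_dotProduct_mulVec (lamMin_le_graphEigs G) v

theorem abs_adjMat_le_one (i j : Fin n) : |adjMat G i j| ≤ 1 := by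
  unfold adjMat
  split_ifs <;> norm_num

end AdjacencySpectrum

section CompleteSplitGraph

variable {n : ℕ} {S T : Finset (Fin n)}

def completeSplitGraph (S T : Finset (Fin n)) : SimpleGraph (Fin n) :=
  SimpleGraph.fromRel fun i j => i ∈ S ∧ (j ∈ S ∨ j ∈ T)

local notation "𝟙[" X "]" => Set.indicator (↑X : Set (Fin n)) (1 : Fin n → ℝ)

theorem adjMat_completeSplitGraph (hST : Disjoint S T) :
    adjMat (completeSplitGraph S T) =
      vecMulVec (𝟙[S ∪ T]) (𝟙[S ∪ T]) - vecMulVec 𝟙[T] 𝟙[T] - diagonal 𝟙[S] := by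
  ext i j
  have hi : i ∈ S → i ∉ T := fun h => disjoint_left.mp hST h
  have hj : j ∈ S → j ∉ T := fun h => disjoint_left.mp hST h
  simp [adjMat, completeSplitGraph, vecMulVec, Set.indicator_apply, diagonal_apply]
  split_ifs <;> simp_all

theorem indicator_one_dotProduct_indicator_one (X Y : Finset (Fin n)) :
    𝟙[X] ⬝ᵥ 𝟙[Y] = #(X ∩ Y) := by
  simp [dotProduct, Set.indicator_apply, ← ite_and, sum_boole, filter_and, inter_comm]

theorem dotProduct_adjMat_completeSplitGraph_mulVec (hST : Disjoint S T) (q : ℝ) :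
    (𝟙[S] + q • 𝟙[T]) ⬝ᵥ adjMat (completeSplitGraph S T) *ᵥ (𝟙[S] + q • 𝟙[T]) =
      #S ^ 2 - #S + 2 * q * #S * #T := by
  have hST' : S ∩ T = ∅ := disjoint_iff_inter_eq_empty.mp hST
  have hdiag : diagonal 𝟙[S] *ᵥ (𝟙[S] + q • 𝟙[T]) = 𝟙[S] := by
    ext i
    have hT : i ∈ S → i ∉ T := fun h => disjoint_left.mp hST h
    by_cases hi : i ∈ S <;> simp_all [mulVec_diagonal, Set.indicator_apply]
  rw [adjMat_completeSplitGraph hST, sub_mulVec, sub_mulVec, hdiag]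
  simp [-coe_union, vecMulVec_mulVec, dotProduct_sub, dotProduct_add, add_dotProduct,
    indicator_one_dotProduct_indicator_one, hST', inter_comm T S,
    inter_eq_left.mpr subset_union_left]
  ring

theorem dotProduct_self_indicator_add_smul_indicator (hST : Disjoint S T) (q : ℝ) :
    (𝟙[S] + q • 𝟙[T]) ⬝ᵥ (𝟙[S] + q • 𝟙[T]) = #S + q ^ 2 * #T := by
  have hST' : S ∩ T = ∅ := disjoint_iff_inter_eq_empty.mp hST
  simp [dotProduct_add, add_dotProduct, indicator_one_dotProduct_indicator_one, hST',
    inter_comm T S]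
  ring

theorem le_spread_completeSplitGraph (hST : Disjoint S T) (hS : #S = 2 * #T) (hT : 0 < #T) :
    (10 * #T - 1) / 3 ≤ spread (completeSplitGraph S T) := by
  set H := completeSplitGraph S T
  have ht : (0 : ℝ) < #T := by exact_mod_cast hT
  have hmax : 8 * (#T : ℝ) - 2 ≤ 3 * lamMax H := by
    have h := dotProduct_adjMat_mulVec_le_lamMax H (𝟙[S] + (1 : ℝ) • 𝟙[T])
    rw [dotProduct_adjMat_completeSplitGraph_mulVec hST,
      dotProduct_self_indicator_add_smul_indicator hST, hS] at h
    push_cast at h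
    exact le_of_mul_le_mul_right (by linarith) ht
  have hmin : 6 * lamMin H ≤ -4 * (#T : ℝ) - 2 := by
    have h := lamMin_mul_le_dotProduct_adjMat_mulVec H (𝟙[S] + (-2 : ℝ) • 𝟙[T])
    rw [dotProduct_adjMat_completeSplitGraph_mulVec hST,
      dotProduct_self_indicator_add_smul_indicator hST, hS] at h
    push_cast at h
    exact le_of_mul_le_mul_right (by linarith) ht
  unfold spread
  linarith

end CompleteSplitGraph

/-- Extremal eigenvectors of a spread-extremal graph have infinity norm `O(n^{-1/2})`. -/
theorem spread_extremal_eigenvector_linf :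
    ∃ C : ℝ, 0 < C ∧ ∃ N : ℕ, ∀ n : ℕ, N ≤ n →
      ∀ G : SimpleGraph (Fin n), (∀ H : SimpleGraph (Fin n), spread H ≤ spread G) →
      ∀ x z : Fin n → ℝ, (∑ u, x u ^ 2 = 1) → (∑ u, z u ^ 2 = 1) →
        (adjMat G).mulVec x = lamMax G • x →
        (adjMat G).mulVec z = lamMin G • z →
        ∀ u : Fin n, |x u| ≤ C / Real.sqrt n ∧ |z u| ≤ C / Real.sqrt n := by
  refine ⟨20, by norm_num, 42, fun n hn G hG x z hx hz hxG hzG u => ?_⟩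
  obtain ⟨S, T, hST, hS, hT⟩ := Finset.exists_disjoint_card_eq (α := Fin n)
    (s := 2 * (n / 3)) (t := n / 3) (by rw [Fintype.card_fin]; omega)
  have hspread := (le_spread_completeSplitGraph hST (by omega) (by omega)).trans (hG _)
  have hmax_le := abs_le_card_of_mulVec_eq_smul (abs_adjMat_le_one G) hx hxG
  have hmin_le := abs_le_card_of_mulVec_eq_smul (abs_adjMat_le_one G) hz hzG
  have hTn : (n : ℝ) ≤ 3 * #T + 2 := by rw [hT]; exact_mod_cast (by omega : n ≤ 3 * (n / 3) + 2)
  have hn' : (42 : ℝ) ≤ n := by exact_mod_cast hn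
  simp only [Fintype.card_fin, abs_le] at hmax_le hmin_le
  unfold spread at hspread
  have hmax_large : (n : ℝ) ≤ 20 * |lamMax G| := by linarith [le_abs_self (lamMax G)]
  have hmin_large : (n : ℝ) ≤ 20 * |lamMin G| := by linarith [neg_le_abs (lamMin G)]
  exact ⟨by simpa using abs_apply_le_div_sqrt_card (abs_adjMat_le_one G) hx hxG (by simpa) u,
    by simpa using abs_apply_le_div_sqrt_card (abs_adjMat_le_one G) hz hzG (by simpa) u⟩
end

section
/- Let W be a graphon such that spr(W) ≥ spr(U) for every graphon U, and let f, g ∈ L²[0,1] be unit eigenfunctions of W for the eigenvalues μ(W) and ν(W), respectively. Then: (i) for a.e. (x,y) ∈ [0,1]², W(x,y) = 1 if f(x)f(y) > g(x)g(y) and W(x,y) = 0 if f(x)f(y) < g(x)g(y); and (ii) f(x)f(y) − g(x)g(y) ≠ 0 for a.e. (x,y) ∈ [0,1]². -/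
open MeasureTheory

/-- Lebesgue measure restricted to the unit square `[0,1]²`. -/
noncomputable def unitSq : Measure (ℝ × ℝ) :=
  volume.restrict (Set.Icc (0 : ℝ) 1 ×ˢ Set.Icc (0 : ℝ) 1)

/-- Lebesgue measure restricted to the unit interval `[0,1]`. -/
noncomputable def unitInt : Measure ℝ := volume.restrict (Set.Icc (0 : ℝ) 1)

/-- A graphon: a measurable function with values in `[0,1]` which is symmetric
almost everywhere on `[0,1]²`. -/
def IsGraphon (W : ℝ → ℝ → ℝ) : Prop :=
  Measurable (Function.uncurry W) ∧ (∀ x y, W x y ∈ Set.Icc (0 : ℝ) 1) ∧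
    (∀ᵐ p : ℝ × ℝ ∂unitSq, W p.1 p.2 = W p.2 p.1)

/-- A unit function of `L²[0,1]`: measurable with `∫₀¹ f² = 1`. -/
def IsUnitL2 (f : ℝ → ℝ) : Prop :=
  Measurable f ∧ (∫ x in Set.Icc (0 : ℝ) 1, (f x) ^ 2) = 1

/-- The quadratic form `∫₀¹∫₀¹ W(x,y) f(x) f(y) dx dy`. -/
noncomputable def quadForm (W : ℝ → ℝ → ℝ) (f : ℝ → ℝ) : ℝ :=
  ∫ x in Set.Icc (0 : ℝ) 1, ∫ y in Set.Icc (0 : ℝ) 1, W x y * f x * f y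

/-- `μ(W)`, the maximum eigenvalue of the kernel operator associated to `W`. -/
noncomputable def graphonMu (W : ℝ → ℝ → ℝ) : ℝ :=
  sSup {r : ℝ | ∃ f : ℝ → ℝ, IsUnitL2 f ∧ r = quadForm W f}

/-- `ν(W)`, the minimum eigenvalue of the kernel operator associated to `W`. -/
noncomputable def graphonNu (W : ℝ → ℝ → ℝ) : ℝ :=
  sInf {r : ℝ | ∃ f : ℝ → ℝ, IsUnitL2 f ∧ r = quadForm W f}

/-- The spread `spr(W) = μ(W) − ν(W)` of a graphon. -/
noncomputable def graphonSpr (W : ℝ → ℝ → ℝ) : ℝ := graphonMu W - graphonNu W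

/-- `f` is a `lam`-eigenfunction of the kernel operator of `W`. -/
def IsEigenfunction (W : ℝ → ℝ → ℝ) (lam : ℝ) (f : ℝ → ℝ) : Prop :=
  ∀ᵐ x ∂unitInt, (∫ y in Set.Icc (0 : ℝ) 1, W x y * f y) = lam * f x

/-!
Write `Δ(V) = ⟨f, V f⟩ - ⟨g, V g⟩`. Since `f`, `g` are eigenfunctions for `μ(W)`, `ν(W)`,
`Δ(W) = spr W`. The kernel `U = 1{f ⊗ f > g ⊗ g}` maximises `Δ` pointwise, and
`Δ(U) ≤ spr U ≤ spr W`; hence `(U - W)(f ⊗ f - g ⊗ g) = 0` a.e., which is (i).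

For (ii), every graphon `V` with `Δ(V) = spr W` has `f` as a maximiser of its quadratic form, so
the first variation `⟨f, V z⟩ + ⟨z, V f⟩` vanishes for all `z ⊥ f`. Applying this to `U` and to
`U + 1_D`, for a symmetric set `D` of ties `f ⊗ f = g ⊗ g`, gives `∫_D (f ⊗ z + z ⊗ f) = 0`.
With `z = g` (orthogonal to `f`, as `spr W ≥ spr 1 > 0` separates the eigenvalues) this forces
`f ⊗ g + g ⊗ f = 0` a.e. on the ties, i.e. `(f(x) + i g(x)) (f(y) + i g(y)) = 0`; with
`z = 1_Z` for the common zero set `Z` of `f` and `g`, and `D = Z × S ∪ S × Z`, it forces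
`|Z| ∫_S f = 0` for every `S`, so `Z` is null.
-/

instance : IsProbabilityMeasure unitInt :=
  ⟨by rw [unitInt, Measure.restrict_apply_univ, Real.volume_Icc]; norm_num⟩

lemma unitSq_eq_prod : unitSq = unitInt.prod unitInt := by
  rw [unitInt, unitSq, Measure.prod_restrict, ← Measure.volume_eq_prod]

lemma eq_zero_of_forall_mul_le_sq_mul {S C : ℝ} (h : ∀ t : ℝ, t * S ≤ t ^ 2 * C) : S = 0 := by
  obtain ⟨k, hk, hCk⟩ : ∃ k : ℝ, 0 < k ∧ C ≤ k :=
    ⟨|C| + 1, by positivity, by linarith [le_abs_self C]⟩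
  obtain ⟨t, rfl⟩ : ∃ t, S = 2 * k * t := ⟨S / (2 * k), by field_simp⟩
  have h1 : k * t ^ 2 ≤ 0 := by nlinarith [h t, mul_le_mul_of_nonneg_left hCk (sq_nonneg t)]
  have ht : t ^ 2 = 0 := le_antisymm (nonpos_of_mul_nonpos_right h1 hk) (sq_nonneg t)
  simp [pow_eq_zero_iff two_ne_zero |>.1 ht]

lemma eq_zero_and_eq_zero_or_eq_zero_and_eq_zero {a b c d : ℝ} (h1 : a * c = b * d)
    (h2 : a * d + b * c = 0) : (a = 0 ∧ b = 0) ∨ (c = 0 ∧ d = 0) := by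
  have : (⟨a, b⟩ : ℂ) * ⟨c, d⟩ = 0 := Complex.ext (by simp [h1]) (by simp [h2])
  rcases mul_eq_zero.1 this with h | h
  · exact .inl ⟨congrArg Complex.re h, congrArg Complex.im h⟩
  · exact .inr ⟨congrArg Complex.re h, congrArg Complex.im h⟩

lemma measure_eq_zero_of_setIntegral_eq_zero {α : Type*} [MeasurableSpace α] {μ : Measure α}
    {s : Set α} {h : α → ℝ} (hs : MeasurableSet s) (hpos : ∀ x ∈ s, 0 < h x)
    (hint : IntegrableOn h s μ) (h0 : ∫ x in s, h x ∂μ = 0) : μ s = 0 := by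
  have hnn : 0 ≤ᵐ[μ.restrict s] h :=
    (ae_restrict_iff' hs).2 (ae_of_all _ fun x hx => (hpos x hx).le)
  have := (setIntegral_pos_iff_support_of_nonneg_ae hnn hint).not.1 h0.not_gt
  rwa [Set.inter_eq_right.2 fun x hx => Function.mem_support.2 (hpos x hx).ne', not_lt,
    nonpos_iff_eq_zero] at this

lemma integrable_kernel_mul {α β : Type*} [MeasurableSpace α] [MeasurableSpace β]
    {μ : Measure α} {ν : Measure β} [SFinite ν] {V : α → β → ℝ}
    (hVm : Measurable (Function.uncurry V)) {C : ℝ} (hVb : ∀ x y, |V x y| ≤ C)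
    {φ : α → ℝ} {ψ : β → ℝ} (hφ : Integrable φ μ) (hψ : Integrable ψ ν) :
    Integrable (fun p : α × β => V p.1 p.2 * φ p.1 * ψ p.2) (μ.prod ν) := by
  refine ((hφ.abs.mul_prod hψ.abs).const_mul C).mono'
    ((hVm.aestronglyMeasurable.mul hφ.1.comp_fst).mul hψ.1.comp_snd) (ae_of_all _ fun p => ?_)
  rw [Real.norm_eq_abs, abs_mul, abs_mul, mul_assoc]
  exact mul_le_mul_of_nonneg_right (hVb _ _) (by positivity)

section UnitVectors

variable {f φ : ℝ → ℝ}

lemma IsUnitL2.integral_sq (hf : IsUnitL2 f) : ∫ x, f x ^ 2 ∂unitInt = 1 := hf.2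

lemma IsUnitL2.memLp (hf : IsUnitL2 f) : MemLp f 2 unitInt :=
  (memLp_two_iff_integrable_sq hf.1.aestronglyMeasurable).2 <|
    .of_integral_ne_zero (by rw [hf.integral_sq]; exact one_ne_zero)

lemma IsUnitL2.integrable (hf : IsUnitL2 f) : Integrable f unitInt :=
  hf.memLp.integrable one_le_two

lemma IsUnitL2.integral_abs_le_one (hf : IsUnitL2 f) : ∫ x, |f x| ∂unitInt ≤ 1 := by
  have hsq := hf.memLp.integrable_sq
  calc ∫ x, |f x| ∂unitInt ≤ ∫ x, (f x ^ 2 + 1) / 2 ∂unitInt :=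
        integral_mono hf.integrable.abs ((hsq.add (integrable_const 1)).div_const 2)
          fun x => by nlinarith [sq_abs (f x), sq_nonneg (|f x| - 1)]
    _ = 1 := by
        rw [integral_div, integral_add hsq (integrable_const 1), hf.integral_sq]
        norm_num

lemma isUnitL2_const_mul_inv_sqrt (hφm : Measurable φ) (hφ : 0 < ∫ x, φ x ^ 2 ∂unitInt) :
    IsUnitL2 (fun x => (√(∫ x, φ x ^ 2 ∂unitInt))⁻¹ * φ x) := by
  refine ⟨hφm.const_mul _, ?_⟩
  change ∫ x, (_ * φ x) ^ 2 ∂unitInt = 1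
  simp_rw [mul_pow]
  rw [integral_const_mul, inv_pow, Real.sq_sqrt hφ.le, inv_mul_cancel₀ hφ.ne']

end UnitVectors

lemma quadForm_const_mul (V : ℝ → ℝ → ℝ) (φ : ℝ → ℝ) (c : ℝ) :
    quadForm V (fun x => c * φ x) = c ^ 2 * quadForm V φ := by
  simp only [quadForm, ← integral_const_mul]
  congr 1; ext x; congr 1; ext y; ring

lemma quadForm_one (φ : ℝ → ℝ) : quadForm (fun _ _ => 1) φ = (∫ x, φ x ∂unitInt) ^ 2 := by
  simp only [quadForm, one_mul, integral_const_mul]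
  exact (integral_mul_const _ _).trans (sq _).symm

noncomputable def kernelForm (V : ℝ → ℝ → ℝ) (φ ψ : ℝ → ℝ) : ℝ :=
  ∫ p, V p.1 p.2 * φ p.1 * ψ p.2 ∂(unitInt.prod unitInt)

namespace IsGraphon

variable {V V' : ℝ → ℝ → ℝ} {f g z φ ψ : ℝ → ℝ} {lam lam' : ℝ}

lemma abs_le_one (hV : IsGraphon V) (x y : ℝ) : |V x y| ≤ 1 :=
  abs_le.2 ⟨by linarith [(hV.2.1 x y).1], (hV.2.1 x y).2⟩

lemma integrable_mul (hV : IsGraphon V) (hφ : Integrable φ unitInt)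
    (hψ : Integrable ψ unitInt) :
    Integrable (fun p : ℝ × ℝ => V p.1 p.2 * φ p.1 * ψ p.2) (unitInt.prod unitInt) :=
  integrable_kernel_mul hV.1 hV.abs_le_one hφ hψ

lemma quadForm_eq_kernelForm (hV : IsGraphon V) (hφ : Integrable φ unitInt) :
    quadForm V φ = kernelForm V φ φ :=
  (integral_prod _ (hV.integrable_mul hφ hφ)).symm

lemma kernelForm_comm (hV : IsGraphon V) : kernelForm V φ ψ = kernelForm V ψ φ := by
  rw [kernelForm, kernelForm, ← integral_prod_swap]
  have hsymm := hV.2.2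
  rw [unitSq_eq_prod] at hsymm
  refine integral_congr_ae ?_
  filter_upwards [hsymm] with p hp
  simp only [Prod.fst_swap, Prod.snd_swap, hp]
  ring

lemma kernelForm_add_kernel (hV : IsGraphon V) (hV' : IsGraphon V')
    (hφ : Integrable φ unitInt) (hψ : Integrable ψ unitInt) :
    kernelForm (fun x y => V x y + V' x y) φ ψ = kernelForm V φ ψ + kernelForm V' φ ψ := by
  simp only [kernelForm, add_mul]
  exact integral_add (hV.integrable_mul hφ hψ) (hV'.integrable_mul hφ hψ)

lemma kernelForm_add_mul_self (hV : IsGraphon V) (hf : Integrable f unitInt)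
    (hz : Integrable z unitInt) (t : ℝ) :
    kernelForm V (fun x => f x + t * z x) (fun x => f x + t * z x) =
      kernelForm V f f + t * (kernelForm V f z + kernelForm V z f) +
        t ^ 2 * kernelForm V z z := by
  have hexpand : (fun p : ℝ × ℝ => V p.1 p.2 * (f p.1 + t * z p.1) * (f p.2 + t * z p.2)) =
      fun p => (V p.1 p.2 * f p.1 * f p.2 +
        t * (V p.1 p.2 * f p.1 * z p.2 + V p.1 p.2 * z p.1 * f p.2)) +
        t ^ 2 * (V p.1 p.2 * z p.1 * z p.2) := by
    ext p; ring
  have hff := hV.integrable_mul hf hf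
  have hfz := hV.integrable_mul hf hz
  have hzf := hV.integrable_mul hz hf
  have hzz := hV.integrable_mul hz hz
  simp only [kernelForm]
  rw [hexpand, integral_add, integral_add, integral_const_mul, integral_const_mul, integral_add]
  all_goals fun_prop

lemma integrable_mul_sub (hV : IsGraphon V) (hf : Integrable f unitInt)
    (hg : Integrable g unitInt) :
    Integrable (fun p : ℝ × ℝ => V p.1 p.2 * (f p.1 * f p.2 - g p.1 * g p.2))
      (unitInt.prod unitInt) := by
  simp only [mul_sub, ← mul_assoc]
  exact (hV.integrable_mul hf hf).sub (hV.integrable_mul hg hg)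

lemma quadForm_sub_quadForm (hV : IsGraphon V) (hf : Integrable f unitInt)
    (hg : Integrable g unitInt) :
    quadForm V f - quadForm V g =
      ∫ p, V p.1 p.2 * (f p.1 * f p.2 - g p.1 * g p.2) ∂(unitInt.prod unitInt) := by
  rw [hV.quadForm_eq_kernelForm hf, hV.quadForm_eq_kernelForm hg, kernelForm, kernelForm,
    ← integral_sub (hV.integrable_mul hf hf) (hV.integrable_mul hg hg)]
  congr 1; ext p; ring

lemma abs_quadForm_le_one (hV : IsGraphon V) (hf : IsUnitL2 f) : |quadForm V f| ≤ 1 := by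
  have hfi := hf.integrable
  rw [hV.quadForm_eq_kernelForm hfi, kernelForm]
  calc |∫ p, V p.1 p.2 * f p.1 * f p.2 ∂(unitInt.prod unitInt)|
      ≤ ∫ p, |f p.1| * |f p.2| ∂(unitInt.prod unitInt) := by
        refine abs_integral_le_integral_abs.trans <|
          integral_mono (hV.integrable_mul hfi hfi).abs (hfi.abs.mul_prod hfi.abs) fun p => ?_
        rw [abs_mul, abs_mul, mul_assoc]
        exact mul_le_of_le_one_left (by positivity) (hV.abs_le_one _ _)
    _ = (∫ x, |f x| ∂unitInt) ^ 2 := by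
        rw [integral_prod_mul (fun x => |f x|) (fun x => |f x|), sq]
    _ ≤ 1 := pow_le_one₀ (integral_nonneg fun _ => abs_nonneg _) hf.integral_abs_le_one

lemma quadForm_le_graphonMu (hV : IsGraphon V) (hf : IsUnitL2 f) :
    quadForm V f ≤ graphonMu V :=
  le_csSup ⟨1, by rintro _ ⟨u, hu, rfl⟩; exact le_of_abs_le (hV.abs_quadForm_le_one hu)⟩
    ⟨f, hf, rfl⟩

lemma graphonNu_le_quadForm (hV : IsGraphon V) (hf : IsUnitL2 f) :
    graphonNu V ≤ quadForm V f :=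
  csInf_le ⟨-1, by rintro _ ⟨u, hu, rfl⟩; exact neg_le_of_abs_le (hV.abs_quadForm_le_one hu)⟩
    ⟨f, hf, rfl⟩

lemma quadForm_sub_le_graphonSpr (hV : IsGraphon V) (hf : IsUnitL2 f) (hg : IsUnitL2 g) :
    quadForm V f - quadForm V g ≤ graphonSpr V := by
  have := hV.quadForm_le_graphonMu hf
  have := hV.graphonNu_le_quadForm hg
  rw [graphonSpr]
  linarith

lemma quadForm_le_graphonMu_mul (hV : IsGraphon V) (hφm : Measurable φ)
    (hφ : 0 < ∫ x, φ x ^ 2 ∂unitInt) :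
    quadForm V φ ≤ graphonMu V * ∫ x, φ x ^ 2 ∂unitInt := by
  have h := hV.quadForm_le_graphonMu (isUnitL2_const_mul_inv_sqrt hφm hφ)
  rwa [quadForm_const_mul, inv_pow, Real.sq_sqrt hφ.le, inv_mul_le_iff₀ hφ, mul_comm] at h

lemma kernelForm_eq_of_isEigenfunction (hV : IsGraphon V) (hf : Integrable f unitInt)
    (hg : Integrable g unitInt) (hge : IsEigenfunction V lam g) :
    kernelForm V f g = lam * ∫ x, f x * g x ∂unitInt := by
  rw [kernelForm, integral_prod _ (hV.integrable_mul hf hg), ← integral_const_mul]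
  refine integral_congr_ae ?_
  filter_upwards [hge] with x hx
  calc ∫ y, V x y * f x * g y ∂unitInt = f x * ∫ y, V x y * g y ∂unitInt := by
        rw [← integral_const_mul]; congr 1; ext y; ring
    _ = lam * (f x * g x) := by
        rw [show ∫ y, V x y * g y ∂unitInt = lam * g x from hx]; ring

lemma quadForm_eq_of_isEigenfunction (hV : IsGraphon V) (hf : IsUnitL2 f)
    (hfe : IsEigenfunction V lam f) : quadForm V f = lam := by
  rw [hV.quadForm_eq_kernelForm hf.integrable,
    hV.kernelForm_eq_of_isEigenfunction hf.integrable hf.integrable hfe]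
  simp only [← sq, hf.integral_sq, mul_one]

lemma integral_mul_eq_zero_of_isEigenfunction (hV : IsGraphon V) (hf : Integrable f unitInt)
    (hg : Integrable g unitInt) (hfe : IsEigenfunction V lam f)
    (hge : IsEigenfunction V lam' g) (hne : lam ≠ lam') : ∫ x, f x * g x ∂unitInt = 0 := by
  have h := hV.kernelForm_comm (φ := f) (ψ := g)
  rw [hV.kernelForm_eq_of_isEigenfunction hf hg hge,
    hV.kernelForm_eq_of_isEigenfunction hg hf hfe] at h
  simp only [mul_comm (g _)] at h
  exact (mul_eq_mul_right_iff.1 h).resolve_left hne.symm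

/-- First variation of `⟨φ, V φ⟩ / ‖φ‖²` at its maximiser `f`, in the direction `z ⊥ f`. -/
lemma kernelForm_add_eq_zero_of_quadForm_eq_graphonMu (hV : IsGraphon V) (hf : IsUnitL2 f)
    (hfmax : quadForm V f = graphonMu V) (hzm : Measurable z) (hz : MemLp z 2 unitInt)
    (hfz : ∫ x, f x * z x ∂unitInt = 0) : kernelForm V f z + kernelForm V z f = 0 := by
  have hfi := hf.integrable
  have hzi := hz.integrable one_le_two
  refine eq_zero_of_forall_mul_le_sq_mul
    (C := (∫ x, z x ^ 2 ∂unitInt) * graphonMu V - kernelForm V z z) fun t => ?_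
  have hnorm : ∫ x, (f x + t * z x) ^ 2 ∂unitInt = 1 + t ^ 2 * ∫ x, z x ^ 2 ∂unitInt := by
    have hexpand : (fun x => (f x + t * z x) ^ 2) =
        fun x => (f x ^ 2 + 2 * t * (f x * z x)) + t ^ 2 * z x ^ 2 := by
      ext x; ring
    have hf2 := hf.memLp.integrable_sq
    have hfz2 : Integrable (fun x => f x * z x) unitInt := hf.memLp.integrable_mul hz
    have hz2 := hz.integrable_sq
    rw [hexpand, integral_add (by fun_prop) (by fun_prop), integral_add hf2 (by fun_prop),
      integral_const_mul, integral_const_mul, hf.integral_sq, hfz]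
    ring
  have h := hV.quadForm_le_graphonMu_mul (φ := fun x => f x + t * z x)
    (hf.1.add (hzm.const_mul t)) (by rw [hnorm]; positivity)
  rw [hnorm, hV.quadForm_eq_kernelForm (φ := fun x => f x + t * z x) (hfi.add (hzi.const_mul t)),
    hV.kernelForm_add_mul_self hfi hzi, ← hV.quadForm_eq_kernelForm hfi, hfmax] at h
  linarith

end IsGraphon

lemma isGraphon_one : IsGraphon (fun _ _ => 1) :=
  ⟨measurable_const, fun _ _ => ⟨zero_le_one, le_rfl⟩, ae_of_all _ fun _ => rfl⟩

lemma unitInt_real_Icc_half : unitInt.real (Set.Icc 0 (1 / 2)) = 1 / 2 := by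
  rw [unitInt, measureReal_restrict_apply measurableSet_Icc,
    Set.Icc_inter_Icc, measureReal_def, Real.volume_Icc]
  norm_num

lemma graphonSpr_one_pos : 0 < graphonSpr (fun _ _ => 1) := by
  set φ : ℝ → ℝ := (Set.Icc 0 (1 / 2)).indicator fun _ => √2
  have hφ : IsUnitL2 φ := by
    refine ⟨measurable_const.indicator measurableSet_Icc, ?_⟩
    change ∫ x, φ x ^ 2 ∂unitInt = 1
    simp only [φ, sq, ← Set.indicator_mul, Real.mul_self_sqrt zero_le_two]
    rw [integral_indicator_const _ measurableSet_Icc, unitInt_real_Icc_half]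
    norm_num
  have hφ1 : quadForm (fun _ _ => 1) φ = 1 / 2 := by
    rw [quadForm_one, integral_indicator_const _ measurableSet_Icc, unitInt_real_Icc_half,
      smul_eq_mul, mul_pow, Real.sq_sqrt zero_le_two]
    norm_num
  have h1 : quadForm (fun _ _ => 1) (fun _ => 1) = 1 := by simp [quadForm_one]
  have hone : IsUnitL2 (fun _ => 1) := ⟨measurable_const, by simp⟩
  have := isGraphon_one.quadForm_sub_le_graphonSpr hone hφ
  rw [h1, hφ1] at this
  linarith

noncomputable def setKernel (D : Set (ℝ × ℝ)) : ℝ → ℝ → ℝ := fun x y => D.indicator 1 (x, y)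

noncomputable def extremalKernel (f g : ℝ → ℝ) : ℝ → ℝ → ℝ :=
  setKernel {p | g p.1 * g p.2 < f p.1 * f p.2}

section Kernels

variable {D : Set (ℝ × ℝ)} {V : ℝ → ℝ → ℝ} {f g : ℝ → ℝ}

lemma isGraphon_setKernel (hD : MeasurableSet D) (hDs : ∀ p ∈ D, p.swap ∈ D) :
    IsGraphon (setKernel D) := by
  refine ⟨measurable_const.indicator hD, fun x y => ?_, ae_of_all _ fun p => ?_⟩
  · by_cases h : (x, y) ∈ D <;> simp [setKernel, h]
  · have : p.swap ∈ D ↔ p ∈ D := ⟨fun h => hDs _ h, hDs p⟩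
    change D.indicator 1 p = D.indicator 1 p.swap
    by_cases h : p ∈ D <;> simp [h, this]

lemma IsGraphon.add_setKernel (hV : IsGraphon V) (hD : MeasurableSet D)
    (hDs : ∀ p ∈ D, p.swap ∈ D) (hDV : ∀ p ∈ D, V p.1 p.2 = 0) :
    IsGraphon (fun x y => V x y + setKernel D x y) := by
  obtain ⟨hm, -, hsymm⟩ := isGraphon_setKernel hD hDs
  refine ⟨hV.1.add hm, fun x y => ?_, ?_⟩
  · by_cases h : (x, y) ∈ D
    · simp [setKernel, h, hDV _ h]
    · simpa [setKernel, h] using hV.2.1 x y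
  · filter_upwards [hV.2.2, hsymm] with p h1 h2
    rw [h1, h2]

lemma kernelForm_setKernel_add_kernelForm (hD : MeasurableSet D) {φ ψ : ℝ → ℝ}
    (hφ : Integrable φ unitInt) (hψ : Integrable ψ unitInt) :
    kernelForm (setKernel D) φ ψ + kernelForm (setKernel D) ψ φ =
      ∫ p in D, φ p.1 * ψ p.2 + ψ p.1 * φ p.2 ∂(unitInt.prod unitInt) := by
  have hm : Measurable (Function.uncurry (setKernel D)) := measurable_const.indicator hD
  have hb (x y : ℝ) : |setKernel D x y| ≤ 1 := by
    by_cases h : (x, y) ∈ D <;> simp [setKernel, h]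
  rw [kernelForm, kernelForm, ← integral_add (integrable_kernel_mul hm hb hφ hψ)
    (integrable_kernel_mul hm hb hψ hφ), ← integral_indicator hD]
  congr 1; ext p
  by_cases h : p ∈ D <;> simp [setKernel, h]

lemma isGraphon_extremalKernel (hf : Measurable f) (hg : Measurable g) :
    IsGraphon (extremalKernel f g) :=
  isGraphon_setKernel (measurableSet_lt (by fun_prop) (by fun_prop)) fun p hp => by
    simpa [mul_comm] using hp

lemma extremalKernel_eq_zero_of_le {x y : ℝ} (h : f x * f y ≤ g x * g y) :
    extremalKernel f g x y = 0 := by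
  simp [extremalKernel, setKernel, not_lt.2 h]

lemma IsGraphon.mul_sub_le_extremalKernel_mul_sub (hV : IsGraphon V) (x y : ℝ) :
    V x y * (f x * f y - g x * g y) ≤ extremalKernel f g x y * (f x * f y - g x * g y) := by
  have hV01 := hV.2.1 x y
  by_cases h : g x * g y < f x * f y
  · have : extremalKernel f g x y = 1 := by simp [extremalKernel, setKernel, h]
    rw [this, one_mul]
    exact mul_le_of_le_one_left (by linarith) hV01.2
  · rw [extremalKernel_eq_zero_of_le (not_lt.1 h), zero_mul]
    exact mul_nonpos_of_nonneg_of_nonpos hV01.1 (by linarith)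

lemma IsGraphon.quadForm_sub_le_extremalKernel (hV : IsGraphon V) (hfm : Measurable f)
    (hgm : Measurable g) (hf : Integrable f unitInt) (hg : Integrable g unitInt) :
    quadForm V f - quadForm V g ≤
      quadForm (extremalKernel f g) f - quadForm (extremalKernel f g) g := by
  have hU := isGraphon_extremalKernel hfm hgm
  rw [hV.quadForm_sub_quadForm hf hg, hU.quadForm_sub_quadForm hf hg]
  exact integral_mono (hV.integrable_mul_sub hf hg) (hU.integrable_mul_sub hf hg)
    fun p => hV.mul_sub_le_extremalKernel_mul_sub p.1 p.2

lemma IsGraphon.ae_eq_one_and_eq_zero_of_extremalKernel_le (hV : IsGraphon V)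
    (hfm : Measurable f) (hgm : Measurable g) (hf : Integrable f unitInt)
    (hg : Integrable g unitInt)
    (h : quadForm (extremalKernel f g) f - quadForm (extremalKernel f g) g ≤
      quadForm V f - quadForm V g) :
    ∀ᵐ p ∂unitSq,
      (g p.1 * g p.2 < f p.1 * f p.2 → V p.1 p.2 = 1) ∧
      (f p.1 * f p.2 < g p.1 * g p.2 → V p.1 p.2 = 0) := by
  have hU := isGraphon_extremalKernel hfm hgm
  have hgap := le_antisymm (hV.quadForm_sub_le_extremalKernel hfm hgm hf hg) h
  rw [hV.quadForm_sub_quadForm hf hg, hU.quadForm_sub_quadForm hf hg] at hgap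
  have hae := (integral_eq_iff_of_ae_le (hV.integrable_mul_sub hf hg)
    (hU.integrable_mul_sub hf hg)
    (ae_of_all _ fun p => hV.mul_sub_le_extremalKernel_mul_sub p.1 p.2)).1 hgap
  rw [unitSq_eq_prod]
  filter_upwards [hae] with p hp
  refine ⟨fun hlt => ?_, fun hlt => ?_⟩
  · have hU1 : extremalKernel f g p.1 p.2 = 1 := by simp [extremalKernel, setKernel, hlt]
    rw [hU1, one_mul] at hp
    exact (mul_eq_right₀ (sub_ne_zero.2 hlt.ne')).1 hp
  · rw [extremalKernel_eq_zero_of_le hlt.le, zero_mul] at hp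
    exact (mul_eq_zero.1 hp).resolve_right (sub_ne_zero.2 hlt.ne)

end Kernels

def IsSpreadExtremal (W : ℝ → ℝ → ℝ) : Prop :=
  ∀ U : ℝ → ℝ → ℝ, IsGraphon U → graphonSpr U ≤ graphonSpr W

namespace IsSpreadExtremal

variable {W V : ℝ → ℝ → ℝ} {f g z : ℝ → ℝ} {D : Set (ℝ × ℝ)}

lemma graphonNu_lt_graphonMu (hmax : IsSpreadExtremal W) : graphonNu W < graphonMu W := by
  have := graphonSpr_one_pos.trans_le (hmax _ isGraphon_one)
  rw [graphonSpr] at this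
  linarith

lemma quadForm_sub_extremalKernel_eq (hmax : IsSpreadExtremal W) (hW : IsGraphon W)
    (hf : IsUnitL2 f) (hg : IsUnitL2 g) (hgap : quadForm W f - quadForm W g = graphonSpr W) :
    quadForm (extremalKernel f g) f - quadForm (extremalKernel f g) g = graphonSpr W := by
  have hU := isGraphon_extremalKernel hf.1 hg.1
  refine le_antisymm ((hU.quadForm_sub_le_graphonSpr hf hg).trans (hmax _ hU)) ?_
  exact hgap ▸ hW.quadForm_sub_le_extremalKernel hf.1 hg.1 hf.integrable hg.integrable

lemma quadForm_eq_graphonMu (hmax : IsSpreadExtremal W) (hV : IsGraphon V) (hf : IsUnitL2 f)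
    (hg : IsUnitL2 g) (hgap : quadForm V f - quadForm V g = graphonSpr W) :
    quadForm V f = graphonMu V := by
  have := hV.quadForm_le_graphonMu hf
  have := hV.graphonNu_le_quadForm hg
  have := hmax V hV
  unfold graphonSpr at *
  linarith

lemma setIntegral_eq_zero_of_tie (hmax : IsSpreadExtremal W) (hV : IsGraphon V)
    (hf : IsUnitL2 f) (hg : IsUnitL2 g) (hgap : quadForm V f - quadForm V g = graphonSpr W)
    (hD : MeasurableSet D) (hDs : ∀ p ∈ D, p.swap ∈ D) (hDV : ∀ p ∈ D, V p.1 p.2 = 0)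
    (hDtie : ∀ p ∈ D, f p.1 * f p.2 = g p.1 * g p.2) (hzm : Measurable z)
    (hz : MemLp z 2 unitInt) (hfz : ∫ x, f x * z x ∂unitInt = 0) :
    ∫ p in D, f p.1 * z p.2 + z p.1 * f p.2 ∂(unitInt.prod unitInt) = 0 := by
  have hfi := hf.integrable
  have hzi := hz.integrable one_le_two
  have hV' := hV.add_setKernel hD hDs hDV
  have hgap' : quadForm (fun x y => V x y + setKernel D x y) f -
      quadForm (fun x y => V x y + setKernel D x y) g = graphonSpr W := by
    rw [hV'.quadForm_sub_quadForm hfi hg.integrable, ← hgap,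
      hV.quadForm_sub_quadForm hfi hg.integrable]
    congr 1; ext p
    by_cases hp : p ∈ D
    · simp [setKernel, hp, hDtie p hp]
    · simp [setKernel, hp]
  have h := hV.kernelForm_add_eq_zero_of_quadForm_eq_graphonMu hf
    (hmax.quadForm_eq_graphonMu hV hf hg hgap) hzm hz hfz
  have h' := hV'.kernelForm_add_eq_zero_of_quadForm_eq_graphonMu hf
    (hmax.quadForm_eq_graphonMu hV' hf hg hgap') hzm hz hfz
  have hDg := isGraphon_setKernel hD hDs
  rw [hV.kernelForm_add_kernel hDg hfi hzi, hV.kernelForm_add_kernel hDg hzi hfi] at h'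
  rw [← kernelForm_setKernel_add_kernelForm hD hfi hzi]
  linarith

lemma ae_add_eq_zero_of_mul_eq_mul (hmax : IsSpreadExtremal W) (hf : IsUnitL2 f)
    (hg : IsUnitL2 g)
    (hgap : quadForm (extremalKernel f g) f - quadForm (extremalKernel f g) g = graphonSpr W)
    (hfg : ∫ x, f x * g x ∂unitInt = 0) :
    ∀ᵐ p ∂(unitInt.prod unitInt), f p.1 * f p.2 = g p.1 * g p.2 →
      f p.1 * g p.2 + g p.1 * f p.2 = 0 := by
  have hfm := hf.1
  have hgm := hg.1
  have hnull (σ : ℝ) : (unitInt.prod unitInt) {p | f p.1 * f p.2 = g p.1 * g p.2 ∧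
      0 < σ * (f p.1 * g p.2 + g p.1 * f p.2)} = 0 := by
    have hD : MeasurableSet {p : ℝ × ℝ | f p.1 * f p.2 = g p.1 * g p.2 ∧
        0 < σ * (f p.1 * g p.2 + g p.1 * f p.2)} :=
      (measurableSet_eq_fun (f := fun p : ℝ × ℝ => f p.1 * f p.2) (by fun_prop)
        (by fun_prop)).inter
        (measurableSet_lt measurable_const (by fun_prop :
          Measurable fun p : ℝ × ℝ => σ * (f p.1 * g p.2 + g p.1 * f p.2)))
    have h0 := hmax.setIntegral_eq_zero_of_tie (isGraphon_extremalKernel hfm hgm) hf hg hgap hD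
      (fun p hp => ⟨by simpa [mul_comm] using hp.1, by simpa [mul_comm, add_comm] using hp.2⟩)
      (fun p hp => extremalKernel_eq_zero_of_le hp.1.le) (fun p hp => hp.1) hgm hg.memLp hfg
    refine measure_eq_zero_of_setIntegral_eq_zero hD (fun p hp => hp.2) ?_
      (by rw [integral_const_mul, h0, mul_zero])
    exact (((hf.integrable.mul_prod hg.integrable).add
      (hg.integrable.mul_prod hf.integrable)).const_mul σ).integrableOn
  filter_upwards [measure_eq_zero_iff_ae_notMem.1 (hnull 1),
    measure_eq_zero_iff_ae_notMem.1 (hnull (-1))] with p hpos hneg htie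
  by_contra hne
  rcases lt_or_gt_of_ne hne with h | h
  · exact hneg ⟨htie, by linarith⟩
  · exact hpos ⟨htie, by linarith⟩

lemma measure_common_zeros_eq_zero (hmax : IsSpreadExtremal W) (hf : IsUnitL2 f)
    (hg : IsUnitL2 g)
    (hgap : quadForm (extremalKernel f g) f - quadForm (extremalKernel f g) g = graphonSpr W) :
    unitInt {x | f x = 0 ∧ g x = 0} = 0 := by
  set Z := {x | f x = 0 ∧ g x = 0}
  have hZ : MeasurableSet Z :=
    (measurableSet_eq_fun hf.1 measurable_const).inter (measurableSet_eq_fun hg.1 measurable_const)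
  set z : ℝ → ℝ := Z.indicator fun _ => 1
  have hzi : Integrable z unitInt := (integrable_const 1).indicator hZ
  have hmul (S : Set ℝ) (hS : MeasurableSet S) :
      unitInt.real Z * ∫ x in S, f x ∂unitInt = 0 := by
    have hDtie : ∀ p ∈ Z ×ˢ S ∪ S ×ˢ Z, f p.1 * f p.2 = g p.1 * g p.2 := by
      rintro p (⟨⟨hf1, hg1⟩, -⟩ | ⟨-, ⟨hf2, hg2⟩⟩) <;> simp [*]
    have hfz : ∫ x, f x * z x ∂unitInt = 0 := by
      refine integral_eq_zero_of_ae (ae_of_all _ fun x => ?_)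
      by_cases hx : x ∈ Z
      · simp [hx.1]
      · simp [z, hx]
    have h0 := hmax.setIntegral_eq_zero_of_tie (isGraphon_extremalKernel hf.1 hg.1) hf hg hgap
      ((hZ.prod hS).union (hS.prod hZ))
      (fun p hp => by rcases hp with ⟨h1, h2⟩ | ⟨h1, h2⟩ <;> simp_all)
      (fun p hp => extremalKernel_eq_zero_of_le (hDtie p hp).le) hDtie
      (measurable_const.indicator hZ) (memLp_indicator_const 2 hZ 1 (.inr (measure_ne_top _ _)))
      hfz
    have hpt : (Z ×ˢ S ∪ S ×ˢ Z).indicator (fun p => f p.1 * z p.2 + z p.1 * f p.2) =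
        fun p => S.indicator f p.1 * z p.2 + z p.1 * S.indicator f p.2 := by
      ext ⟨x, y⟩
      by_cases hx : x ∈ Z <;> by_cases hy : y ∈ Z <;> by_cases hxS : x ∈ S <;>
        by_cases hyS : y ∈ S <;> simp_all [z, Z]
    have hfS := hf.integrable.indicator hS
    rw [← integral_indicator ((hZ.prod hS).union (hS.prod hZ)), hpt,
      integral_add (hfS.mul_prod hzi) (hzi.mul_prod hfS), integral_prod_mul, integral_prod_mul,
      integral_indicator hS, integral_indicator_const _ hZ] at h0
    simp only [smul_eq_mul, mul_one] at h0
    linarith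
  by_contra hZ0
  have hm : 0 < unitInt.real Z := ENNReal.toReal_pos hZ0 (measure_ne_top _ _)
  have hf0 : f =ᵐ[unitInt] 0 := hf.integrable.ae_eq_zero_of_forall_setIntegral_eq_zero
    fun S hS _ => (mul_eq_zero.1 (hmul S hS)).resolve_left hm.ne'
  have h1 := hf.integral_sq
  rw [integral_congr_ae (g := 0) (hf0.mono fun x hx => by simp [hx])] at h1
  simp at h1

end IsSpreadExtremal

/-- For a spread-maximal graphon `W` with extremal unit eigenfunctions `f, g`:
`W` is the indicator of `{f(x)f(y) > g(x)g(y)}` a.e., and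
`f(x)f(y) ≠ g(x)g(y)` a.e. on `[0,1]²`. -/
theorem graphon_extremal_indicator (W : ℝ → ℝ → ℝ) (hW : IsGraphon W)
    (hmax : ∀ U : ℝ → ℝ → ℝ, IsGraphon U → graphonSpr U ≤ graphonSpr W)
    (f g : ℝ → ℝ) (hf : IsUnitL2 f) (hg : IsUnitL2 g)
    (hfe : IsEigenfunction W (graphonMu W) f)
    (hge : IsEigenfunction W (graphonNu W) g) :
    (∀ᵐ p : ℝ × ℝ ∂unitSq,
      (g p.1 * g p.2 < f p.1 * f p.2 → W p.1 p.2 = 1) ∧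
      (f p.1 * f p.2 < g p.1 * g p.2 → W p.1 p.2 = 0)) ∧
    (∀ᵐ p : ℝ × ℝ ∂unitSq, f p.1 * f p.2 - g p.1 * g p.2 ≠ 0) := by
  have hmax : IsSpreadExtremal W := hmax
  have hgapW : quadForm W f - quadForm W g = graphonSpr W := by
    rw [hW.quadForm_eq_of_isEigenfunction hf hfe, hW.quadForm_eq_of_isEigenfunction hg hge,
      graphonSpr]
  have hgapU := hmax.quadForm_sub_extremalKernel_eq hW hf hg hgapW
  have hfg := hW.integral_mul_eq_zero_of_isEigenfunction hf.integrable hg.integrable hfe hge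
    hmax.graphonNu_lt_graphonMu.ne'
  refine ⟨hW.ae_eq_one_and_eq_zero_of_extremalKernel_le hf.1 hg.1 hf.integrable hg.integrable
    (hgapU.trans hgapW.symm).le, ?_⟩
  have hZ := measure_eq_zero_iff_ae_notMem.1 (hmax.measure_common_zeros_eq_zero hf hg hgapU)
  rw [unitSq_eq_prod]
  filter_upwards [hmax.ae_add_eq_zero_of_mul_eq_mul hf hg hgapU hfg,
    Measure.quasiMeasurePreserving_fst.ae hZ, Measure.quasiMeasurePreserving_snd.ae hZ]
    with p htie hx hy hsub
  have hff := sub_eq_zero.1 hsub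
  rcases eq_zero_and_eq_zero_or_eq_zero_and_eq_zero hff (htie hff) with h | h
  exacts [hx h, hy h]
end
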